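/- Let D = (G, O, w) be a weighted oriented graph with directed edges (z,y), (y,x) ∈ E(D) such that y ∈ V⁺ and N_D(x) = {y, x₁, …, x_s}. If there exist vertices z_i ∈ N_D(x_i) ∖ N_D⁺(y) for i = 1, …, s such that {z, x, z₁, …, z_s} is a stable set of G, then I(D) is not unmixed. -/

import Mathlib

/-! ## Weighted oriented graphs -/

/-- A weighted oriented graph `D = (G, 𝒪, w)`: an orientation of a finite simple
graph together with a weight function, where sources have weight `1`. -/
structure WOGraph (V : Type) where
  /-- the set of directed edges -/
  E : V → V → Prop
  irrefl : ∀ x, ¬ E x x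
  asymm : ∀ x y, E x y → ¬ E y x
  /-- the weight function -/
  w : V → ℕ
  w_pos : ∀ x, 1 ≤ w x
  source_one : ∀ x, (∀ y, ¬ E y x) → w x = 1

namespace WOGraph

variable {V : Type}

/-- The underlying simple graph `G` of `D`. -/
def graph (D : WOGraph V) : SimpleGraph V := SimpleGraph.fromRel D.E

/-- Out-neighbourhood `N⁺_D(x)`. -/
def outN (D : WOGraph V) (x : V) : Set V := {y | D.E x y}

/-- In-neighbourhood `N⁻_D(x)`. -/
def inN (D : WOGraph V) (x : V) : Set V := {y | D.E y x}

/-- Neighbourhood `N_D(x)`. -/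
def nbr (D : WOGraph V) (x : V) : Set V := {y | D.E x y ∨ D.E y x}

/-- `N_D(A)` for a set `A` of vertices. -/
def nbrS (D : WOGraph V) (A : Set V) : Set V := {y | ∃ a ∈ A, y ∈ D.nbr a}

/-- `N⁺_D(A)` for a set `A` of vertices. -/
def outNS (D : WOGraph V) (A : Set V) : Set V := {y | ∃ a ∈ A, D.E a y}

/-- `V⁺`, the set of vertices of weight `> 1`. -/
def Vplus (D : WOGraph V) : Set V := {x | 1 < D.w x}

/-- A vertex cover of `D`. -/
def IsVC (D : WOGraph V) (C : Set V) : Prop := ∀ u v, D.E u v → u ∈ C ∨ v ∈ C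

/-- `L₁(C)`. -/
def L1 (D : WOGraph V) (C : Set V) : Set V := {x | x ∈ C ∧ ∃ y, D.E x y ∧ y ∉ C}

/-- `L₂(C)`. -/
def L2 (D : WOGraph V) (C : Set V) : Set V :=
  {x | x ∈ C ∧ x ∉ D.L1 C ∧ ∃ y, D.E y x ∧ y ∉ C}

/-- `L₃(C)`. -/
def L3 (D : WOGraph V) (C : Set V) : Set V := {x | x ∈ C ∧ x ∉ D.L1 C ∧ x ∉ D.L2 C}

/-- A strong vertex cover of `D`. -/
def IsStrongVC (D : WOGraph V) (C : Set V) : Prop :=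
  D.IsVC C ∧ ∀ x ∈ D.L3 C, ∃ y, D.E y x ∧ y ∈ C ∧ y ∉ D.L1 C ∧ 1 < D.w y

/-- A weighted oriented subgraph of `D`. -/
structure OSub (D : WOGraph V) where
  verts : Set V
  E : V → V → Prop
  sub : ∀ u v, E u v → D.E u v
  memL : ∀ u v, E u v → u ∈ verts
  memR : ∀ u v, E u v → v ∈ verts

namespace OSub

variable {D : WOGraph V}

/-- The underlying simple graph of a weighted oriented subgraph. -/
def graph (H : D.OSub) : SimpleGraph V := SimpleGraph.fromRel H.E

/-- Neighbourhood inside the subgraph. -/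
def nbr (H : D.OSub) (x : V) : Set V := {y | H.E x y ∨ H.E y x}

/-- Degree inside the subgraph. -/
noncomputable def deg (H : D.OSub) (x : V) : ℕ := (H.nbr x).ncard

/-- `H` is contained in `K`. -/
def le (H K : D.OSub) : Prop := H.verts ⊆ K.verts ∧ ∀ u v, H.E u v → K.E u v

end OSub

/-- The induced weighted oriented subgraph on a set `A` of vertices. -/
def induced (D : WOGraph V) (A : Set V) : D.OSub where
  verts := A
  E u v := D.E u v ∧ u ∈ A ∧ v ∈ A
  sub _ _ h := h.1
  memL _ _ h := h.2.1
  memR _ _ h := h.2.2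

/-- `K` is an induced weighted oriented subgraph of `D`. -/
def IsInducedSub {D : WOGraph V} (K : D.OSub) : Prop :=
  ∀ u v, D.E u v → u ∈ K.verts → v ∈ K.verts → K.E u v

/-- A root oriented tree (ROT) with parent `v`. -/
def IsROT (D : WOGraph V) (T : D.OSub) (v : V) : Prop :=
  v ∈ T.verts ∧ T.graph.IsAcyclic ∧
  (∀ x ∈ T.verts, Relation.ReflTransGen T.E v x) ∧
  (∀ x ∈ T.verts, D.w x = 1 → (T.deg x = 1 ∧ x ≠ v) ∨ (T.verts = {v} ∧ x = v))

/-- A unicycle oriented subgraph whose (unique) cycle has vertex set `Cs`. -/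
def IsUnicycle (D : WOGraph V) (B : D.OSub) (Cs : Set V) : Prop :=
  (∃ (n : ℕ) (f : ZMod n → V), 3 ≤ n ∧ Function.Injective f ∧ Set.range f = Cs ∧
      ∀ i, B.E (f i) (f (i + 1))) ∧
  (∀ (a : V) (p : B.graph.Walk a a), p.IsCycle → {x | x ∈ p.support} = Cs) ∧
  (∀ y ∈ B.verts, y ∉ Cs → ∃ x ∈ Cs, Relation.ReflTransGen B.E x y) ∧
  (∀ x ∈ B.verts, D.w x = 1 → B.deg x = 1)

/-- A `⋆`-semi-forest structure on a weighted oriented subgraph `H` of `D`. -/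
structure SSF (D : WOGraph V) (H : D.OSub) where
  r : ℕ
  s : ℕ
  T : Fin r → D.OSub
  parent : Fin r → V
  B : Fin s → D.OSub
  Cs : Fin s → Set V
  hT : ∀ i, D.IsROT (T i) (parent i)
  hB : ∀ j, D.IsUnicycle (B j) (Cs j)
  hverts : H.verts = (⋃ i, (T i).verts) ∪ (⋃ j, (B j).verts)
  hE : ∀ u v, H.E u v ↔ ((∃ i, (T i).E u v) ∨ (∃ j, (B j).E u v))
  hTT : ∀ i i', i ≠ i' → Disjoint (T i).verts (T i').verts
  hBB : ∀ j j', j ≠ j' → Disjoint (B j).verts (B j').verts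
  hTB : ∀ i j, Disjoint (T i).verts (B j).verts
  wv : Fin r → V
  hwv_not : ∀ i, wv i ∉ H.verts
  hwv_nbr : ∀ i, wv i ∈ D.nbr (parent i)
  W1 : Set V
  W2 : Set V
  hW_union : W1 ∪ W2 = Set.range wv
  hW_disj : Disjoint W1 W2
  hW1_stable : ∀ x ∈ W1, ∀ y ∈ W1, ¬ D.graph.Adj x y
  hW2_plus : W2 ⊆ D.Vplus
  hW2_edge : ∀ i, wv i ∈ W2 → D.E (wv i) (parent i)
  hW1_out : D.outNS (W2 ∪ ({x | x ∈ H.verts ∧ 2 ≤ H.deg x} ∪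
      {x | (∃ i, parent i = x) ∧ H.deg x = 1})) ∩ W1 = ∅

/-- The set `H̃` associated with a `⋆`-semi-forest. -/
noncomputable def SSF.tilde {D : WOGraph V} {H : D.OSub} (F : D.SSF H) : Set V :=
  {x | x ∈ H.verts ∧ 2 ≤ H.deg x} ∪ {x | (∃ i, F.parent i = x) ∧ H.deg x = 1}

/-- `K` has a generating `⋆`-semi-forest. -/
def HasGenSSF (D : WOGraph V) (K : D.OSub) : Prop :=
  ∃ H : D.OSub, Nonempty (D.SSF H) ∧ H.verts = K.verts

/-- The `⋆`-condition for a 5-tuple `(a', a, b, b', c)` written along an induced 5-cycle. -/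
def StarCond (D : WOGraph V) (a' a b b' c : V) : Prop :=
  (D.E a' a ∧ D.w a' = 1) ∧
  (D.inN a ⊆ D.nbr c ∧ D.inN a ∩ D.Vplus ⊆ D.inN c) ∧
  (D.nbr b' ⊆ D.nbr a' ∪ D.outN a ∧ D.inN b' ∩ D.Vplus ⊆ D.inN a')

/-- The `⋆`-property for an induced 5-cycle `z 0, z 1, z 2, z 3, z 4`. -/
def HasStarProp (D : WOGraph V) (z : Fin 5 → V) : Prop :=
  ∀ i : Fin 5,
    (D.E (z i) (z (i + 1)) ∧ 1 < D.w (z i) →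
      StarCond D (z (i - 1)) (z i) (z (i + 1)) (z (i + 2)) (z (i + 3))) ∧
    (D.E (z (i + 1)) (z i) ∧ 1 < D.w (z (i + 1)) →
      StarCond D (z (i + 2)) (z (i + 1)) (z i) (z (i - 1)) (z (i - 2)))

/-- The edge ideal `I(D)` of a weighted oriented graph in `k[x_v : v ∈ V]`. -/
noncomputable def edgeIdeal (k : Type) [Field k] (D : WOGraph V) : Ideal (MvPolynomial V k) :=
  Ideal.span {f | ∃ u v, D.E u v ∧ f = MvPolynomial.X u * MvPolynomial.X v ^ D.w v}

end WOGraph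

/-! ## Generic graph notions -/

/-- A vertex cover of a simple graph. -/
def gVC {W : Type} (G : SimpleGraph W) (C : Set W) : Prop :=
  ∀ u v, G.Adj u v → u ∈ C ∨ v ∈ C

/-- The vertex cover number `τ(G)`. -/
noncomputable def tau {W : Type} (G : SimpleGraph W) : ℕ :=
  sInf {n | ∃ C : Set W, gVC G C ∧ C.ncard = n}

/-- A stable (independent) set. -/
def Stable {W : Type} (G : SimpleGraph W) (S : Set W) : Prop :=
  ∀ x ∈ S, ∀ y ∈ S, ¬ G.Adj x y

/-- `G` is well-covered: all maximal stable sets have the same cardinality. -/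
def WellCovered {W : Type} (G : SimpleGraph W) : Prop :=
  ∀ S T : Set W, Maximal (Stable G) S → Maximal (Stable G) T → S.ncard = T.ncard

/-- `e` is (the vertex set of) an edge of `G`. -/
def IsEdgeSet {W : Type} (G : SimpleGraph W) (e : Set W) : Prop :=
  ∃ u v, G.Adj u v ∧ e = {u, v}

/-- An edge `e = {b, b'}` has the property (P). -/
def PropP {W : Type} (G : SimpleGraph W) (e : Set W) : Prop :=
  ∀ a b a' b', e = {b, b'} → G.Adj a b → G.Adj a' b' → a ∉ e → a' ∉ e → G.Adj a a'

/-- A matching of `G`, as a set of (vertex sets of) edges. -/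
def IsMatchingSet {W : Type} (G : SimpleGraph W) (M : Set (Set W)) : Prop :=
  (∀ e ∈ M, IsEdgeSet G e) ∧ M.Pairwise Disjoint

/-- A perfect matching of `G`. -/
def IsPerfectMatchingSet {W : Type} (G : SimpleGraph W) (M : Set (Set W)) : Prop :=
  IsMatchingSet G M ∧ ⋃₀ M = Set.univ

/-- The matching number `ν(G)`. -/
noncomputable def nu {W : Type} (G : SimpleGraph W) : ℕ :=
  sSup {n | ∃ M, IsMatchingSet G M ∧ M.ncard = n}

/-- The degree of a vertex. -/
noncomputable def gdeg {W : Type} (G : SimpleGraph W) (x : W) : ℕ := (G.neighborSet x).ncard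

/-- `v` is a simplicial vertex: its closed neighbourhood is a clique. -/
def IsSimplicialVtx {W : Type} (G : SimpleGraph W) (v : W) : Prop :=
  G.IsClique (insert v (G.neighborSet v))

/-- The set `S_G` of (vertex sets of) simplexes of `G`. -/
def SimplexSets {W : Type} (G : SimpleGraph W) : Set (Set W) :=
  {S | ∃ v, IsSimplicialVtx G v ∧ S = insert v (G.neighborSet v)}

/-- `G` is a simplicial graph. -/
def SimplicialGraph {W : Type} (G : SimpleGraph W) : Prop :=
  ∀ v, IsSimplicialVtx G v ∨ ∃ u, G.Adj v u ∧ IsSimplicialVtx G u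

/-- The cycle graph on `ZMod n`. -/
def cycGraph (n : ℕ) : SimpleGraph (ZMod n) := SimpleGraph.fromRel (fun i j => j = i + 1)

/-- `G` is chordal: it has no induced cycles of length `≥ 4`. -/
def Chordal {W : Type} (G : SimpleGraph W) : Prop :=
  ∀ n : ℕ, 4 ≤ n → ∀ A : Set W, IsEmpty (G.induce A ≃g cycGraph n)

/-- `G` has a cycle of length `k`. -/
def HasCycleLen {W : Type} (G : SimpleGraph W) (k : ℕ) : Prop :=
  ∃ (a : W) (p : G.Walk a a), p.IsCycle ∧ p.length = k

/-- `z 0, z 1, z 2, z 3, z 4` is an induced 5-cycle of `G`. -/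
def IsInduced5Cycle {W : Type} (G : SimpleGraph W) (z : Fin 5 → W) : Prop :=
  Function.Injective z ∧ ∀ i j : Fin 5, G.Adj (z i) (z j) ↔ (j = i + 1 ∨ i = j + 1)

/-- A basic 5-cycle: an induced 5-cycle without two adjacent vertices of degree `≥ 3`. -/
def IsBasic5Cycle {W : Type} (G : SimpleGraph W) (z : Fin 5 → W) : Prop :=
  IsInduced5Cycle G z ∧ ∀ i : Fin 5, ¬ (3 ≤ gdeg G (z i) ∧ 3 ≤ gdeg G (z (i + 1)))

/-- The set `C_G` of (vertex sets of) basic 5-cycles of `G`. -/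
def Basic5Sets {W : Type} (G : SimpleGraph W) : Set (Set W) :=
  {A | ∃ z : Fin 5 → W, IsBasic5Cycle G z ∧ A = Set.range z}

/-- The clique number `ω(G)`. -/
noncomputable def cliqueNum' {W : Type} (G : SimpleGraph W) : ℕ :=
  sSup {n | ∃ s : Set W, G.IsClique s ∧ s.ncard = n}

/-- `G` is a perfect graph. -/
def IsPerfectGraph {W : Type} (G : SimpleGraph W) : Prop :=
  ∀ A : Set W, (G.induce A).chromaticNumber = (cliqueNum' (G.induce A) : ℕ∞)

/-- A `τ`-reduction of `G` into the induced subgraphs on the `A i`. -/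
noncomputable def TauReduction {W : Type} (G : SimpleGraph W) (s : ℕ) (A : Fin s → Set W) : Prop :=
  (∀ i j, i ≠ j → Disjoint (A i) (A j)) ∧ (⋃ i, A i) = Set.univ ∧
  tau G = ∑ i, tau (G.induce (A i))

/-- `G` is an SCQ graph witnessed by the matching `Q`. -/
def IsSCQ {V : Type} (D : WOGraph V) (Q : Set (Set V)) : Prop :=
  (Q = ∅ ∨ (IsMatchingSet D.graph Q ∧ ∀ e ∈ Q, PropP D.graph e)) ∧
  (∀ A ∈ SimplexSets D.graph ∪ Basic5Sets D.graph ∪ Q,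
    ∀ B ∈ SimplexSets D.graph ∪ Basic5Sets D.graph ∪ Q, A = B ∨ Disjoint A B) ∧
  ⋃₀ (SimplexSets D.graph ∪ Basic5Sets D.graph ∪ Q) = Set.univ

/-- An ideal is unmixed if all its associated primes have the same height. -/
def IsUnmixed {R : Type} [CommRing R] (I : Ideal R) : Prop :=
  ∀ p q : Ideal R, p ∈ associatedPrimes R (R ⧸ I) → q ∈ associatedPrimes R (R ⧸ I) →
    ∀ (hp : p.IsPrime) (hq : q.IsPrime),
      Order.height (⟨p, hp⟩ : PrimeSpectrum R) = Order.height (⟨q, hq⟩ : PrimeSpectrum R)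
/-! ## Concrete graphs -/

/-- The 7-cycle `C₇`. -/
def C7graph : SimpleGraph (ZMod 7) := cycGraph 7

/-- Vertices of `T₁₀`. -/
inductive T10V | v | a1 | a2 | a3 | b1 | b2 | b3 | c1 | c2 | c3
deriving DecidableEq

open T10V in
instance : Fintype T10V where
  elems := {v, a1, a2, a3, b1, b2, b3, c1, c2, c3}
  complete := by intro x; cases x <;> decide

open T10V in
/-- The graph `T₁₀`. -/
def T10graph : SimpleGraph T10V := SimpleGraph.fromRel (fun x y =>
  (x, y) ∈ ([(v,a1), (v,a2), (v,a3), (a1,b1), (a2,b2), (a3,b3), (b1,c1), (b2,c2),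
    (b3,c3), (c1,c2), (c2,c3), (c3,c1)] : List (T10V × T10V)))

/-- Vertices of `Q₁₃`. -/
inductive Q13V | a1 | a2 | b1 | b2 | c1 | c2 | d1 | d2 | g1 | g2 | h | h' | v
deriving DecidableEq

open Q13V in
instance : Fintype Q13V where
  elems := {a1, a2, b1, b2, c1, c2, d1, d2, g1, g2, h, h', v}
  complete := by intro x; cases x <;> decide

open Q13V in
/-- The graph `Q₁₃`. -/
def Q13graph : SimpleGraph Q13V := SimpleGraph.fromRel (fun x y =>
  (x, y) ∈ ([(a1,a2), (a1,d1), (a2,d2), (d1,c1), (d1,g1), (d1,h), (d2,c2), (d2,g2),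
    (d2,h), (g1,b1), (g1,h'), (g2,b2), (g2,h'), (b1,c2), (b2,c1), (h,v),
    (h',v)] : List (Q13V × Q13V)))

/-- Vertices of `P₁₃`. -/
inductive P13V | a1 | a2 | a3 | a4 | b1 | b2 | b3 | b4 | c1 | c2 | d1 | d2 | v
deriving DecidableEq

open P13V in
instance : Fintype P13V where
  elems := {a1, a2, a3, a4, b1, b2, b3, b4, c1, c2, d1, d2, v}
  complete := by intro x; cases x <;> decide

open P13V in
/-- The graph `P₁₃`. -/
def P13graph : SimpleGraph P13V := SimpleGraph.fromRel (fun x y =>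
  (x, y) ∈ ([(a1,a2), (a1,b1), (a2,b2), (a3,a4), (a3,b3), (a4,b4), (b1,c1), (b2,c1),
    (b3,c2), (b4,c2), (c1,c2), (d1,b1), (d1,b3), (d2,b2), (d2,b4), (v,d1),
    (v,d2)] : List (P13V × P13V)))

/-- Vertices of `P₁₄`. -/
inductive P14V | a1 | a2 | a3 | a4 | a5 | a6 | a7 | b1 | b2 | b3 | b4 | b5 | b6 | b7
deriving DecidableEq

open P14V in
instance : Fintype P14V where
  elems := {a1, a2, a3, a4, a5, a6, a7, b1, b2, b3, b4, b5, b6, b7}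
  complete := by intro x; cases x <;> decide

open P14V in
/-- The graph `P₁₄`. -/
def P14graph : SimpleGraph P14V := SimpleGraph.fromRel (fun x y =>
  (x, y) ∈ ([(a1,a2), (a2,a3), (a3,a4), (a4,a5), (a5,a6), (a6,a7), (a7,a1),
    (a1,b1), (a2,b2), (a3,b3), (a4,b4), (a5,b5), (a6,b6), (a7,b7),
    (b1,b3), (b2,b4), (b3,b5), (b4,b6), (b5,b7), (b6,b1), (b7,b2)] : List (P14V × P14V)))

/-- Vertices of `P₁₀`. -/
inductive P10V | a1 | a2 | b1 | b2 | c1 | c2 | d1 | d2 | g1 | g2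
deriving DecidableEq

open P10V in
instance : Fintype P10V where
  elems := {a1, a2, b1, b2, c1, c2, d1, d2, g1, g2}
  complete := by intro x; cases x <;> decide

open P10V in
/-- The graph `P₁₀`. -/
def P10graph : SimpleGraph P10V := SimpleGraph.fromRel (fun x y =>
  (x, y) ∈ ([(a1,b1), (b1,d2), (d2,d1), (d1,b2), (b2,a2), (a1,g1), (g1,d1), (g1,c1),
    (c1,c2), (c2,g2), (g2,a2), (d2,g2)] : List (P10V × P10V)))

/-!
For a strong vertex cover `C` of `D`, the prime `P_C = (x_c : c ∈ C)` is associated to `I(D)`: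
it is the annihilator of a suitable monomial modulo `I(D)`. Extend `{z, x, z₁, …, z_s}` to a
stable set `S` that is maximal among those meeting `N⁺(y)` at most in `x`. Then `Sᶜ ∪ {x}` is a
strong vertex cover, the vertex `x` being justified by `(y, x)` with `y ∈ V⁺`; and `Sᶜ` is a vertex
cover, so a minimal (hence associated) prime of `I(D)` lies in `P_{Sᶜ} ⊊ P_{Sᶜ ∪ {x}}`. In the
Noetherian ring `K[x_v]` these two comparable associated primes have different heights.
-/

open MvPolynomial

lemma Finsupp.single_add_single_le_iff {ι : Type*} {u v : ι} (huv : u ≠ v) {a b : ℕ} {μ : ι →₀ ℕ} :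
    Finsupp.single u a + Finsupp.single v b ≤ μ ↔ a ≤ μ u ∧ b ≤ μ v := by
  classical
  refine ⟨fun h => ⟨?_, ?_⟩, fun ⟨ha, hb⟩ i => ?_⟩
  · simpa [huv] using h u
  · simpa [huv.symm] using h v
  · by_cases hu : i = u
    · subst hu; simpa [huv] using ha
    · by_cases hv : i = v
      · subst hv; simpa [hu] using hb
      · simp [Ne.symm hu, Ne.symm hv]

lemma not_isUnmixed_of_lt {R : Type} [CommRing R] [IsNoetherianRing R] {I p q : Ideal R}
    (hp : p ∈ associatedPrimes R (R ⧸ I)) (hq : q ∈ associatedPrimes R (R ⧸ I)) (hpq : p < q) :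
    ¬ IsUnmixed I := by
  intro h
  have hheight := h p q hp hq hp.isPrime hq.isPrime
  rw [← PrimeSpectrum.height_eq_orderHeight, ← PrimeSpectrum.height_eq_orderHeight] at hheight
  have := hp.isPrime
  exact (Ideal.height_strict_mono_of_isPrime hpq).ne hheight

lemma exists_mem_associatedPrimes_le {R : Type} [CommRing R] [IsNoetherianRing R]
    {I J : Ideal R} [J.IsPrime] (h : I ≤ J) : ∃ p ∈ associatedPrimes R (R ⧸ I), p ≤ J := by
  obtain ⟨p, hp, hpJ⟩ := Ideal.exists_minimalPrimes_le h
  have hp' : p ∈ (Module.annihilator R (R ⧸ I)).minimalPrimes := by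
    rwa [Ideal.annihilator_quotient]
  exact ⟨p, Module.associatedPrimes.minimalPrimes_annihilator_subset_associatedPrimes R _ hp', hpJ⟩

namespace MvPolynomial

variable {σ R : Type*} [CommRing R]

lemma X_mem_span_X_image_iff [Nontrivial R] {s : Set σ} {a : σ} :
    (X a : MvPolynomial σ R) ∈ Ideal.span (X '' s) ↔ a ∈ s := by
  classical
  simp [mem_ideal_span_X_image, support_X, Finsupp.single_apply]

lemma span_X_image_strictMono [Nontrivial R] :
    StrictMono (fun s : Set σ => Ideal.span (X '' s : Set (MvPolynomial σ R))) := by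
  intro s t hst
  obtain ⟨a, hat, has⟩ := Set.exists_of_ssubset hst
  refine lt_of_le_of_ne (Ideal.span_mono (Set.image_mono hst.subset)) fun h => has ?_
  rw [← X_mem_span_X_image_iff (R := R)]
  exact (congrArg (X a ∈ ·) h).mpr (X_mem_span_X_image_iff.mpr hat)

open Classical in
lemma isPrime_span_X_image [IsDomain R] (s : Set σ) :
    (Ideal.span (X '' s : Set (MvPolynomial σ R))).IsPrime := by
  -- `span (X '' s)` is the kernel of `kill`, since `kill` induces the identity modulo it.
  let kill : MvPolynomial σ R →ₐ[R] MvPolynomial σ R := aeval fun v => if v ∈ s then 0 else X v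
  have hmk : (Ideal.Quotient.mkₐ R (Ideal.span (X '' s))).comp kill = Ideal.Quotient.mkₐ R _ := by
    refine algHom_ext fun v => ?_
    by_cases hv : v ∈ s
    · simp only [AlgHom.comp_apply, aeval_X, kill, if_pos hv, map_zero, Ideal.Quotient.mkₐ_eq_mk]
      exact (Ideal.Quotient.eq_zero_iff_mem.mpr
        (Ideal.subset_span (Set.mem_image_of_mem X hv))).symm
    · simp [kill, hv]
  suffices Ideal.span (X '' s) = RingHom.ker kill from this ▸ RingHom.ker_isPrime _
  refine le_antisymm (Ideal.span_le.mpr ?_) fun f hf => ?_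
  · rintro _ ⟨v, hv, rfl⟩
    simp [kill, hv]
  · rw [← Ideal.Quotient.eq_zero_iff_mem, ← Ideal.Quotient.mkₐ_eq_mk R, ← hmk]
    simp [(RingHom.mem_ker).mp hf]

end MvPolynomial

lemma Stable.exists_dominating_superset {W : Type} [Finite W] {G : SimpleGraph W} {A U : Set W}
    (hA : Stable G A) (hAU : A ⊆ U) :
    ∃ S, A ⊆ S ∧ S ⊆ U ∧ Stable G S ∧ ∀ c ∈ U, c ∉ S → ∃ t ∈ S, G.Adj c t := by
  obtain ⟨S, hAS, hmax⟩ :=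
    Finite.exists_le_maximal (p := fun S : Set W => S ⊆ U ∧ Stable G S) ⟨hAU, hA⟩
  obtain ⟨hSU, hS⟩ := hmax.prop
  refine ⟨S, hAS, hSU, hS, fun c hcU hcS => ?_⟩
  by_contra! hc
  have hinsert : Stable G (insert c S) := by
    rintro a (rfl | ha) b (rfl | hb) hab
    · exact hab.ne rfl
    · exact hc b hb hab
    · exact hc a ha hab.symm
    · exact hS a ha b hb hab
  exact hcS (hmax.le_of_ge ⟨Set.insert_subset hcU hSU, hinsert⟩ (Set.subset_insert c S)
    (Set.mem_insert c S))

namespace WOGraph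

variable {V : Type} (D : WOGraph V)

lemma graph_adj_iff {u v : V} : D.graph.Adj u v ↔ v ∈ D.nbr u := by
  rw [graph, SimpleGraph.fromRel_adj]
  refine ⟨And.right, fun h => ⟨?_, h⟩⟩
  rintro rfl
  exact h.elim (D.irrefl u) (D.irrefl u)

lemma ne_of_E {u v : V} (h : D.E u v) : u ≠ v := by
  rintro rfl
  exact D.irrefl u h

lemma isVC_compl_of_stable {S : Set V} (hS : Stable D.graph S) : D.IsVC Sᶜ := by
  intro u v he
  by_contra! h
  simp only [Set.mem_compl_iff, not_not] at h
  exact hS u h.1 v h.2 (D.graph_adj_iff.mpr (Or.inl he))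

-- Every vertex of `L₃` is `x` or an out-neighbour of `y`, and `y` is the in-neighbour of weight
-- `> 1` that it requires.
lemma isStrongVC_insert_compl {S : Set V} {x y : V} (hS : Stable D.graph S) (hxS : x ∈ S)
    (hyx : D.E y x) (hy : y ∈ D.Vplus) (hyS : ∀ t ∈ S, D.E y t → t = x)
    (hdom : ∀ c ∉ S, ¬ D.E y c → ∃ t ∈ S, t ≠ x ∧ t ∈ D.nbr c) :
    D.IsStrongVC (insert x Sᶜ) := by
  refine ⟨fun u v he => (D.isVC_compl_of_stable hS u v he).imp Or.inr Or.inr, ?_⟩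
  rintro c ⟨hcC, hcL1, hcL2⟩
  have hyC : y ∈ insert x Sᶜ :=
    Or.inr fun hyS' => hS y hyS' x hxS (D.graph_adj_iff.mpr (Or.inl hyx))
  have hyL1 : y ∉ D.L1 (insert x Sᶜ) := by
    rintro ⟨-, t, hyt, htC⟩
    simp only [Set.mem_insert_iff, Set.mem_compl_iff, not_or, not_not] at htC
    exact htC.1 (hyS t htC.2 hyt)
  suffices D.E y c from ⟨y, this, hyC, hyL1, hy⟩
  by_contra hyc
  have hcS : c ∉ S := by
    rcases hcC with rfl | hc
    · exact absurd hyx hyc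
    · exact hc
  obtain ⟨t, htS, htx, htc⟩ := hdom c hcS hyc
  have htC : t ∉ insert x Sᶜ := by simp [htx, htS]
  rcases htc with h | h
  · exact hcL1 ⟨hcC, t, h, htC⟩
  · exact hcL2 ⟨hcC, hcL1, t, h, htC⟩

variable {k : Type} [Field k]

lemma mem_edgeIdeal_iff {f : MvPolynomial V k} :
    f ∈ D.edgeIdeal k ↔ ∀ μ ∈ f.support,
      ∃ u v, D.E u v ∧ Finsupp.single u 1 + Finsupp.single v (D.w v) ≤ μ := by
  have hspan : D.edgeIdeal k = Ideal.span ((fun s => monomial s (1 : k)) ''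
      {s | ∃ u v, D.E u v ∧ s = Finsupp.single u 1 + Finsupp.single v (D.w v)}) := by
    have hgen (u v : V) : (X u * X v ^ D.w v : MvPolynomial V k) =
        monomial (Finsupp.single u 1 + Finsupp.single v (D.w v)) 1 := by
      rw [X_pow_eq_monomial, X, monomial_mul, one_mul]
    rw [edgeIdeal]
    congr 1
    ext f
    simp [hgen, eq_comm]
  rw [hspan, mem_ideal_span_monomial_image]
  simp

-- The monomial with this exponent is annihilated modulo `I(D)` exactly by the variables in `C`.
open Classical in
noncomputable def strongVCExponent [Finite V] (C : Set V) : V →₀ ℕ :=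
  Finsupp.equivFunOnFinite.symm fun v =>
    if v ∉ C then D.w v else if v ∈ D.L1 C then 0 else D.w v - 1

open Classical in
lemma exists_edge_le_add_strongVCExponent_iff [Finite V] {C : Set V} (hC : D.IsStrongVC C)
    (μ : V →₀ ℕ) :
    (∃ u v, D.E u v ∧ Finsupp.single u 1 + Finsupp.single v (D.w v) ≤ μ + D.strongVCExponent C) ↔
      ∃ c ∈ C, μ c ≠ 0 := by
  have hexp (v : V) : D.strongVCExponent C v =
      if v ∉ C then D.w v else if v ∈ D.L1 C then 0 else D.w v - 1 := rfl
  constructor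
  · rintro ⟨u, v, huv, hle⟩
    by_contra! hμ
    obtain ⟨hu, hv⟩ := (Finsupp.single_add_single_le_iff (D.ne_of_E huv)).mp hle
    have := D.w_pos v
    by_cases hvC : v ∈ C
    · rw [Finsupp.add_apply, hμ v hvC, hexp, if_neg (not_not.mpr hvC)] at hv
      split_ifs at hv <;> omega
    · have huC : u ∈ C := (hC.1 u v huv).resolve_right hvC
      rw [Finsupp.add_apply, hμ u huC, hexp, if_neg (not_not.mpr huC),
        if_pos ⟨huC, v, huv, hvC⟩] at hu
      omega
  · rintro ⟨c, hcC, hc⟩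
    have hcμ : Finsupp.single c 1 ≤ μ := Finsupp.single_le_iff.mpr (Nat.one_le_iff_ne_zero.mpr hc)
    suffices ∃ u v, D.E u v ∧ Finsupp.single u 1 + Finsupp.single v (D.w v) ≤
        Finsupp.single c 1 + D.strongVCExponent C from
      this.imp fun u ⟨v, huv, hle⟩ => ⟨v, huv, hle.trans (add_le_add_left hcμ _)⟩
    by_cases hL1 : c ∈ D.L1 C
    · obtain ⟨-, t, hct, htC⟩ := hL1
      refine ⟨c, t, hct, (Finsupp.single_add_single_le_iff (D.ne_of_E hct)).mpr ⟨by simp, ?_⟩⟩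
      simp [hexp, htC, (D.ne_of_E hct)]
    · have hin : ∃ u, D.E u c ∧ 1 ≤ D.strongVCExponent C u := by
        by_cases hL2 : c ∈ D.L2 C
        · obtain ⟨-, -, u, huc, huC⟩ := hL2
          exact ⟨u, huc, by simpa [hexp, huC] using D.w_pos u⟩
        · obtain ⟨u, huc, huC, huL1, hwu⟩ := hC.2 c ⟨hcC, hL1, hL2⟩
          refine ⟨u, huc, ?_⟩
          rw [hexp, if_neg (not_not.mpr huC), if_neg huL1]
          exact Nat.le_sub_one_of_lt hwu
      obtain ⟨u, huc, hu⟩ := hin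
      refine ⟨u, c, huc, (Finsupp.single_add_single_le_iff (D.ne_of_E huc)).mpr ⟨?_, ?_⟩⟩
      · simpa [D.ne_of_E huc] using hu
      · rw [Finsupp.add_apply, Finsupp.single_eq_same, hexp, if_neg (not_not.mpr hcC),
          if_neg hL1]
        have := D.w_pos c
        omega

lemma IsStrongVC.isAssociatedPrime_span_X [Finite V] {D : WOGraph V} {C : Set V}
    (hC : D.IsStrongVC C) :
    IsAssociatedPrime (Ideal.span (X '' C : Set (MvPolynomial V k)))
      (MvPolynomial V k ⧸ D.edgeIdeal k) := by
  refine isAssociatedPrime_iff.mpr ⟨isPrime_span_X_image (R := k) C,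
    Ideal.Quotient.mk _ (monomial (D.strongVCExponent C) 1), ?_⟩
  ext r
  have hsupp : (r * monomial (D.strongVCExponent C) 1).support =
      r.support.map (addRightEmbedding (D.strongVCExponent C)) :=
    AddMonoidAlgebra.support_coeff_mul_single r _ (by simp) _
  rw [Submodule.mem_colon_singleton, Submodule.mem_bot, ← Ideal.Quotient.mk_eq_mk,
    ← Submodule.Quotient.mk_smul, Submodule.Quotient.mk_eq_zero, smul_eq_mul, mem_edgeIdeal_iff,
    hsupp, mem_ideal_span_X_image]
  simp only [Finset.mem_map, addRightEmbedding_apply, forall_exists_index, and_imp,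
    forall_apply_eq_imp_iff₂, D.exists_edge_le_add_strongVCExponent_iff hC]

lemma IsVC.edgeIdeal_le_span_X {D : WOGraph V} {C : Set V} (hC : D.IsVC C) :
    D.edgeIdeal k ≤ Ideal.span (X '' C) := by
  refine Ideal.span_le.mpr ?_
  rintro _ ⟨u, v, he, rfl⟩
  rcases hC u v he with hu | hv
  · exact Ideal.mul_mem_right _ _ (Ideal.subset_span (Set.mem_image_of_mem X hu))
  · exact Ideal.mul_mem_left _ _
      (Ideal.pow_mem_of_mem _ (Ideal.subset_span (Set.mem_image_of_mem X hv)) _ (D.w_pos v))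

end WOGraph

/-- Lemma `StableSet`. -/
theorem stmt15 {V : Type} [Fintype V] (k : Type) [Field k] (D : WOGraph V)
    (z y x : V) (s : ℕ) (xs zs : Fin s → V)
    (hzy : D.E z y) (hyx : D.E y x) (hy : y ∈ D.Vplus)
    (hN : D.nbr x = insert y (Set.range xs))
    (hzs : ∀ i, zs i ∈ D.nbr (xs i) ∧ zs i ∉ D.outN y)
    (hstable : Stable D.graph ({z, x} ∪ Set.range zs)) :
    ¬ IsUnmixed (WOGraph.edgeIdeal k D) := by
  obtain ⟨S, hAS, hSU, hS, hmax⟩ := hstable.exists_dominating_superset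
    (U := {c | D.E y c → c = x}) (by
      rintro c ((rfl | rfl) | ⟨i, rfl⟩) hyc
      · exact absurd hzy (D.asymm _ _ hyc)
      · rfl
      · exact absurd hyc (hzs i).2)
  have hxS : x ∈ S := hAS (Or.inl (Or.inr rfl))
  have hzx : z ≠ x := fun h => D.asymm y x hyx (h ▸ hzy)
  have hdom : ∀ c ∉ S, ¬ D.E y c → ∃ t ∈ S, t ≠ x ∧ t ∈ D.nbr c := by
    intro c hcS hyc
    obtain ⟨t, htS, hct⟩ := hmax c (fun h => absurd h hyc) hcS
    by_cases htx : t = x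
    · have hc : c ∈ D.nbr x := D.graph_adj_iff.mp (htx ▸ hct.symm)
      rw [hN] at hc
      rcases hc with rfl | ⟨i, rfl⟩
      · exact ⟨z, hAS (Or.inl (Or.inl rfl)), hzx, Or.inr hzy⟩
      · exact ⟨zs i, hAS (Or.inr ⟨i, rfl⟩), fun h => (hzs i).2 (h ▸ hyx), (hzs i).1⟩
    · exact ⟨t, htS, htx, D.graph_adj_iff.mp hct⟩
  have hC := D.isStrongVC_insert_compl hS hxS hyx hy hSU hdom
  have := isPrime_span_X_image (R := k) Sᶜ
  obtain ⟨p, hp, hpS⟩ :=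
    exists_mem_associatedPrimes_le ((D.isVC_compl_of_stable hS).edgeIdeal_le_span_X (k := k))
  exact not_isUnmixed_of_lt hp hC.isAssociatedPrime_span_X
    (hpS.trans_lt (span_X_image_strictMono (Set.ssubset_insert (not_not.mpr hxS))))
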